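/- arXiv:0807.4740 — 3 statements merged into one kernel-verified Lean document; each statement's English description precedes it below -/
import Mathlib

section
/- Let n ≥ 1, let κ ≥ 0 and a be real parameters, and let λ = (λ₁,…,λₙ) be a partition. If a < −2(|λ| + κ(n−1)) + 1, then e_μ ≠ e_λ for every partition μ ⊂ λ. -/
open MvPolynomial MeasureTheory Filter
open scoped BigOperators Classical

namespace MVB

noncomputable section

/-! ### Partitions and eigenvalues -/

def IsPartition (n : ℕ) (l : Fin n → ℕ) : Prop := ∀ i j : Fin n, i ≤ j → l j ≤ l i

def wt (n : ℕ) (l : Fin n → ℕ) : ℕ := ∑ i, l i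

/-- `μ ⊂ λ`. -/
def SubPart (n : ℕ) (m l : Fin n → ℕ) : Prop := (∀ i, m i ≤ l i) ∧ m ≠ l

/-- `d_ν = Σᵢ νᵢ(νᵢ − 1 + 2κ(n−i))` (1-indexed `i`). -/
def dEig (n : ℕ) (κ : ℝ) (l : Fin n → ℕ) : ℝ :=
  ∑ i : Fin n, (l i : ℝ) * ((l i : ℝ) - 1 + 2 * κ * ((n : ℝ) - 1 - ((i : ℕ) : ℝ)))

def eEig (n : ℕ) (κ a : ℝ) (l : Fin n → ℕ) : ℝ := dEig n κ l + a * (wt n l : ℝ)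

/-- strict dominance order on partitions of equal weight. -/
def DomLt (n : ℕ) (m l : Fin n → ℕ) : Prop :=
  wt n m = wt n l ∧
  (∀ k : Fin n, ∑ i ∈ Finset.univ.filter (fun i => i ≤ k), m i
      ≤ ∑ i ∈ Finset.univ.filter (fun i => i ≤ k), l i) ∧ m ≠ l

def boundedFuns (n N : ℕ) : Finset (Fin n → ℕ) :=
  (Finset.univ : Finset (Fin n → Fin (N+1))).image (fun f i => (f i : ℕ))

/-- the finset of partitions `μ ⊂ λ`. -/
def strictSubs (n : ℕ) (l : Fin n → ℕ) : Finset (Fin n → ℕ) :=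
  (boundedFuns n (wt n l)).filter (fun m => IsPartition n m ∧ SubPart n m l)

/-- the finset of partitions strictly dominated by `λ`. -/
def domLts (n : ℕ) (l : Fin n → ℕ) : Finset (Fin n → ℕ) :=
  (boundedFuns n (wt n l)).filter (fun m => IsPartition n m ∧ DomLt n m l)

/-- the finset of partitions `μ ⊆ λ`. -/
def subsetsOf (n : ℕ) (l : Fin n → ℕ) : Finset (Fin n → ℕ) :=
  (boundedFuns n (wt n l)).filter (fun m => IsPartition n m ∧ ∀ i, m i ≤ l i)

/-! ### Polynomials, differential operators, Jack and Bessel polynomials -/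

def rc (𝕜 : Type*) [RCLike 𝕜] : ℝ → 𝕜 := algebraMap ℝ 𝕜

/-- the monomial symmetric polynomial `m_λ`. -/
def mSymm (n : ℕ) (𝕜 : Type*) [RCLike 𝕜] (l : Fin n → ℕ) : MvPolynomial (Fin n) 𝕜 :=
  ∑ α ∈ (Finset.univ : Finset (Equiv.Perm (Fin n))).image
      (fun σ => l ∘ (σ : Fin n → Fin n)),
    monomial (Finsupp.equivFunOnFinite.symm α) (1 : 𝕜)

/-- evaluation of a polynomial at a real point. -/
def evalr (n : ℕ) (𝕜 : Type*) [RCLike 𝕜] (p : MvPolynomial (Fin n) 𝕜) (x : Fin n → ℝ) : 𝕜 :=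
  eval (fun i => rc 𝕜 (x i)) p

/-- partial derivative `∂/∂xᵢ`. -/
def pd (n : ℕ) (𝕜 : Type*) [RCLike 𝕜] (i : Fin n) (f : (Fin n → ℝ) → 𝕜) : (Fin n → ℝ) → 𝕜 :=
  fun x => fderiv ℝ f x (Pi.single i 1)

def Distinct (n : ℕ) : Set (Fin n → ℝ) := {x | ∀ i j : Fin n, i ≠ j → x i ≠ x j}

def DistinctNZ (n : ℕ) : Set (Fin n → ℝ) :=
  {x | (∀ i, x i ≠ 0) ∧ ∀ i j : Fin n, i ≠ j → x i ≠ x j}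

/-- `D₂ = Σᵢ xᵢ²∂ᵢ² + 2κ Σ_{i≠j} (xᵢ²/(xᵢ−xⱼ)) ∂ᵢ`. -/
def D2op (n : ℕ) (𝕜 : Type*) [RCLike 𝕜] (κ : ℝ) (f : (Fin n → ℝ) → 𝕜) : (Fin n → ℝ) → 𝕜 :=
  fun x => ∑ i, rc 𝕜 ((x i)^2) * pd n 𝕜 i (pd n 𝕜 i f) x
    + 2 * rc 𝕜 κ * ∑ i, ∑ j ∈ Finset.univ.erase i,
        rc 𝕜 ((x i)^2 / (x i - x j)) * pd n 𝕜 i f x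

/-- `D^B = Σᵢ xᵢ²∂ᵢ² + Σᵢ (a xᵢ + 2) ∂ᵢ + 2κ Σ_{i≠j} (xᵢ²/(xᵢ−xⱼ)) ∂ᵢ`. -/
def DBop (n : ℕ) (𝕜 : Type*) [RCLike 𝕜] (κ a : ℝ) (f : (Fin n → ℝ) → 𝕜) : (Fin n → ℝ) → 𝕜 :=
  fun x => D2op n 𝕜 κ f x + ∑ i, rc 𝕜 (a * x i + 2) * pd n 𝕜 i f x

/-- `P` is a family of (monic) Jack polynomials with parameter `κ`. -/
def IsJackFamily (n : ℕ) (𝕜 : Type*) [RCLike 𝕜] (κ : ℝ)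
    (P : (Fin n → ℕ) → MvPolynomial (Fin n) 𝕜) : Prop :=
  ∀ l : Fin n → ℕ, IsPartition n l →
    (P l).IsSymmetric ∧
    (∃ c : (Fin n → ℕ) → 𝕜,
      P l = mSymm n 𝕜 l + ∑ m ∈ domLts n l, c m • mSymm n 𝕜 m) ∧
    (∀ x ∈ Distinct n, D2op n 𝕜 κ (evalr n 𝕜 (P l)) x = rc 𝕜 (dEig n κ l) * evalr n 𝕜 (P l) x)

/-- `Y` is the multivariable Bessel polynomial attached to the partition `l`. -/
def IsBessel (n : ℕ) (𝕜 : Type*) [RCLike 𝕜] (κ a : ℝ)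
    (P : (Fin n → ℕ) → MvPolynomial (Fin n) 𝕜)
    (l : Fin n → ℕ) (Y : MvPolynomial (Fin n) 𝕜) : Prop :=
  Y.IsSymmetric ∧
  (∃ u : (Fin n → ℕ) → 𝕜, Y = P l + ∑ m ∈ strictSubs n l, u m • P m) ∧
  (∀ x ∈ Distinct n, DBop n 𝕜 κ a (evalr n 𝕜 Y) x = rc 𝕜 (eEig n κ a l) * evalr n 𝕜 Y x)

/-- `B` is the family of generalised binomial coefficients of the Jack family `P`. -/
def IsBinomFamily (n : ℕ) (𝕜 : Type*) [RCLike 𝕜]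
    (P : (Fin n → ℕ) → MvPolynomial (Fin n) 𝕜)
    (B : (Fin n → ℕ) → (Fin n → ℕ) → 𝕜) : Prop :=
  ∀ l : Fin n → ℕ, IsPartition n l → ∀ x : Fin n → ℝ,
    evalr n 𝕜 (P l) (fun i => x i + 1) / evalr n 𝕜 (P l) (fun _ => 1)
      = ∑ m ∈ subsetsOf n l, B l m * evalr n 𝕜 (P m) x / evalr n 𝕜 (P m) (fun _ => 1)

/-! ### Chains (standard tableaux of skew shape) -/

def IsChainLM (n : ℕ) (l m : Fin n → ℕ) (r : ℕ) (c : Fin (r+1) → Fin n → ℕ) : Prop :=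
  c 0 = l ∧ c (Fin.last r) = m ∧
  ∀ k : Fin r, IsPartition n (c k.succ) ∧ SubPart n (c k.succ) (c k.castSucc) ∧
    wt n (c k.castSucc) = wt n (c k.succ) + 1

def chainsLM (n : ℕ) (l m : Fin n → ℕ) (r : ℕ) : Finset (Fin (r+1) → Fin n → ℕ) :=
  ((Finset.univ : Finset (Fin (r+1) → Fin n → Fin (wt n l + 1))).image
    (fun c k i => (c k i : ℕ))).filter (IsChainLM n l m r)

/-- the coefficients in the Jack expansion of the Bessel polynomials. -/
def uCoeff (n : ℕ) (κ a : ℝ) (P : (Fin n → ℕ) → MvPolynomial (Fin n) ℝ)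
    (B : (Fin n → ℕ) → (Fin n → ℕ) → ℝ) (l m : Fin n → ℕ) : ℝ :=
  2 ^ (wt n l - wt n m) *
    ∑ c ∈ chainsLM n l m (wt n l - wt n m),
      ∏ k : Fin (wt n l - wt n m),
        evalr n ℝ (P (c k.castSucc)) (fun _ => 1) / evalr n ℝ (P (c k.succ)) (fun _ => 1)
          * B (c k.castSucc) (c k.succ)
          / (a * (((k : ℕ) : ℝ) + 1) + dEig n κ l - dEig n κ (c k.succ))

/-! ### Hypergeometric data -/

def ascPoch (β : ℝ) (m : ℕ) : ℝ := ∏ j ∈ Finset.range m, (β + (j : ℝ))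

/-- generalised Pochhammer symbol `[α]^{(κ)}_λ`. -/
def genPoch (n : ℕ) (κ α : ℝ) (l : Fin n → ℕ) : ℝ :=
  ∏ i : Fin n, ascPoch (α - κ * ((i : ℕ) : ℝ)) (l i)

def conjPart (n : ℕ) (l : Fin n → ℕ) (j : ℕ) : ℕ :=
  (Finset.univ.filter (fun i => j ≤ l i)).card

/-- `h_λ = ∏_{(i,j)∈λ} (λᵢ − j + κ(λ′ⱼ − i) + 1)`. -/
def hJack (n : ℕ) (κ : ℝ) (l : Fin n → ℕ) : ℝ :=
  ∏ i : Fin n, ∏ j ∈ Finset.range (l i),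
    ((l i : ℝ) - ((j : ℝ) + 1) + κ * ((conjPart n l (j+1) : ℝ) - (((i : ℕ) : ℝ) + 1)) + 1)

/-! ### BC_n Jacobi polynomials -/

def coth (z : ℝ) : ℝ := Real.cosh z / Real.sinh z

def BCdomain (n : ℕ) : Set (Fin n → ℝ) :=
  {z | (∀ i, z i ≠ 0) ∧ ∀ i j : Fin n, i ≠ j → z i ≠ z j ∧ z i ≠ - z j}

def tmap (n : ℕ) (z : Fin n → ℝ) : Fin n → ℝ := fun i => -(Real.sinh (z i / 2))^2

def DBC (n : ℕ) (k1 k2 k3 : ℝ) (f : (Fin n → ℝ) → ℝ) : (Fin n → ℝ) → ℝ :=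
  fun z => ∑ i, pd n ℝ i (pd n ℝ i f) z
    + ∑ i, (k1 * coth (z i / 2) + 2 * k2 * coth (z i)) * pd n ℝ i f z
    + k3 * ∑ i, ∑ j ∈ Finset.univ.filter (fun j => i < j),
        (coth ((z i - z j)/2) * (pd n ℝ i f z - pd n ℝ j f z)
          + coth ((z i + z j)/2) * (pd n ℝ i f z + pd n ℝ j f z))

/-- `F` is the `BC_n` Jacobi polynomial attached to `l`, as a function of `z`. -/
def IsBCJacobi (n : ℕ) (k1 k2 k3 : ℝ) (P : (Fin n → ℕ) → MvPolynomial (Fin n) ℝ)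
    (l : Fin n → ℕ) (F : (Fin n → ℝ) → ℝ) : Prop :=
  (∃ w : (Fin n → ℕ) → ℝ, ∀ z : Fin n → ℝ,
    F z = (-4 : ℝ)^(wt n l) * eval (tmap n z) (P l)
      + ∑ m ∈ strictSubs n l, w m * eval (tmap n z) (P m)) ∧
  (∃ E : ℝ, ∀ z ∈ BCdomain n, DBC n k1 k2 k3 F z = E * F z)

/-! ### The higher order operators `D^B_d` -/

def DBsigned (n : ℕ) (𝕜 : Type*) [RCLike 𝕜] (κ a : ℝ) :
    ℕ → Bool → Fin n → ((Fin n → ℝ) → 𝕜) → ((Fin n → ℝ) → 𝕜)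
  | 0, _, _, f => f
  | (d+1), e, i, f => fun x =>
      (if e then (1 : 𝕜) else -1) *
        ( rc 𝕜 (x i) * pd n 𝕜 i (DBsigned n 𝕜 κ a d e i f) x
          + rc 𝕜 ((a - 1 + 2 / x i) / 2) *
              (DBsigned n 𝕜 κ a d e i f x - DBsigned n 𝕜 κ a d (!e) i f x)
          + rc 𝕜 (κ / 2) * ∑ j ∈ Finset.univ.erase i,
              rc 𝕜 ((x i + x j) / (x i - x j)) *
                (DBsigned n 𝕜 κ a d e i f x - DBsigned n 𝕜 κ a d e j f x)
          + rc 𝕜 (κ / 2) * ∑ j ∈ Finset.univ.erase i,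
              (DBsigned n 𝕜 κ a d e i f x - DBsigned n 𝕜 κ a d (!e) j f x) )

def DBd (n : ℕ) (𝕜 : Type*) [RCLike 𝕜] (κ a : ℝ) (d : ℕ)
    (f : (Fin n → ℝ) → 𝕜) : (Fin n → ℝ) → 𝕜 :=
  fun x => (1/2 : 𝕜) *
    (∑ i, DBsigned n 𝕜 κ a (2*d) true i f x + ∑ i, DBsigned n 𝕜 κ a (2*d) false i f x)

/-- `T` represents the operator `D^B_d` as a map on symmetric polynomials. -/
def Represents (n : ℕ) (𝕜 : Type*) [RCLike 𝕜] (κ a : ℝ) (d : ℕ)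
    (T : MvPolynomial (Fin n) 𝕜 → MvPolynomial (Fin n) 𝕜) : Prop :=
  ∀ p : MvPolynomial (Fin n) 𝕜, p.IsSymmetric →
    (T p).IsSymmetric ∧
    ∀ x ∈ DistinctNZ n, DBd n 𝕜 κ a d (evalr n 𝕜 p) x = evalr n 𝕜 (T p) x

def opMono (n : ℕ) (𝕜 : Type*) [RCLike 𝕜]
    (T : Fin n → (MvPolynomial (Fin n) 𝕜 → MvPolynomial (Fin n) 𝕜))
    (m : Fin n → ℕ) : MvPolynomial (Fin n) 𝕜 → MvPolynomial (Fin n) 𝕜 :=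
  (List.finRange n).foldr (fun i g => (T i)^[m i] ∘ g) id

/-- `Q(T₁,…,Tₙ)` applied to `f`. -/
def opEval (n : ℕ) (𝕜 : Type*) [RCLike 𝕜]
    (T : Fin n → (MvPolynomial (Fin n) 𝕜 → MvPolynomial (Fin n) 𝕜))
    (Q : MvPolynomial (Fin n) 𝕜) (f : MvPolynomial (Fin n) 𝕜) : MvPolynomial (Fin n) 𝕜 :=
  ∑ m ∈ Q.support, Q.coeff m • opMono n 𝕜 T (fun i => m i) f

/-- invariance under sign changes of the variables. -/
def SignInv (n : ℕ) (𝕜 : Type*) [RCLike 𝕜] (p : MvPolynomial (Fin n) 𝕜) : Prop :=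
  ∀ ε : Fin n → 𝕜, (∀ i, ε i = 1 ∨ ε i = -1) →
    ∀ x : Fin n → 𝕜, eval (fun i => ε i * x i) p = eval x p

/-! ### `ρ^B` and the `Δ̂` factors -/

def rhoB (n : ℕ) (κ a : ℝ) : Fin n → ℝ :=
  fun i => κ * ((n : ℝ) - 1 - ((i : ℕ) : ℝ)) + (a - 1) / 2

/-- the vector `λ + ρ^B`. -/
def shiftl (n : ℕ) (κ a : ℝ) (l : Fin n → ℕ) : Fin n → ℝ :=
  fun i => (l i : ℝ) + rhoB n κ a i

def dvP (κ z : ℝ) : ℝ := Real.Gamma (κ + z) / Real.Gamma z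
def dvM (κ z : ℝ) : ℝ := Real.Gamma (-κ + z + 1) / Real.Gamma (z + 1)
def dwP (a z : ℝ) : ℝ := Real.Gamma ((a - 1) / 2 + z) / Real.Gamma (2 * z)
def dwM (a z : ℝ) : ℝ := Real.Gamma (-((a - 1) / 2) + z + 1) / Real.Gamma (2 * z + 1)

def DeltaP (n : ℕ) (κ a : ℝ) (z : Fin n → ℝ) : ℝ :=
  (∏ i : Fin n, ∏ j ∈ Finset.univ.filter (fun j => i < j),
      dvP κ (z i - z j) * dvP κ (z i + z j)) * ∏ i, dwP a (z i)

def DeltaM (n : ℕ) (κ a : ℝ) (z : Fin n → ℝ) : ℝ :=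
  (∏ i : Fin n, ∏ j ∈ Finset.univ.filter (fun j => i < j),
      dvM κ (z i - z j) * dvM κ (z i + z j)) * ∏ i, dwM a (z i)

/-- `t` is not a pole of the Gamma function. -/
def GoodArg (t : ℝ) : Prop := ∀ k : ℕ, t ≠ -(k : ℝ)

def GoodDelta (n : ℕ) (κ a : ℝ) (z : Fin n → ℝ) : Prop :=
  (∀ i j : Fin n, i < j →
    GoodArg (κ + (z i - z j)) ∧ GoodArg (z i - z j) ∧
    GoodArg (κ + (z i + z j)) ∧ GoodArg (z i + z j)) ∧
  ∀ i, GoodArg ((a - 1) / 2 + z i) ∧ GoodArg (2 * z i)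

def vB (κ z : ℝ) : ℝ := (κ + z) / z
def wB (a z : ℝ) : ℝ := ((a - 1) / 2 + z) / (2 * z * (2 * z + 1))

/-- renormalised Bessel polynomials `Ỹ_λ`, as functions, given the family `B` of
monic Bessel polynomials. -/
def Ytil (n : ℕ) (κ a : ℝ) (B : (Fin n → ℕ) → MvPolynomial (Fin n) ℝ)
    (m : Fin n → ℕ) (x : Fin n → ℝ) : ℝ :=
  (1 / 2 ^ (wt n m)) * (DeltaP n κ a (rhoB n κ a) / DeltaP n κ a (shiftl n κ a m))
    * MvPolynomial.eval x (B m)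

def addE (n : ℕ) (i : Fin n) (l : Fin n → ℕ) : Fin n → ℕ := Function.update l i (l i + 1)
def subE (n : ℕ) (i : Fin n) (l : Fin n → ℕ) : Fin n → ℕ := Function.update l i (l i - 1)

def VhatP (n : ℕ) (κ a : ℝ) (i : Fin n) (z : Fin n → ℝ) : ℝ :=
  wB a (z i) * ∏ j ∈ Finset.univ.erase i, vB κ (z i + z j) * vB κ (z i - z j)

def VhatM (n : ℕ) (κ a : ℝ) (i : Fin n) (z : Fin n → ℝ) : ℝ :=
  wB a (-(z i)) * ∏ j ∈ Finset.univ.erase i, vB κ (-(z i) + z j) * vB κ (-(z i) - z j)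

/-! ### Data for the general Pieri formulae -/

def zeta (n : ℕ) (t : Fin n → Fin 3) : Fin n → ℤ := fun i => (t i : ℤ) - 1

def suppZ (n : ℕ) (ν : Fin n → ℤ) : Finset (Fin n) := Finset.univ.filter (fun i => ν i ≠ 0)

def EBr (n : ℕ) (r : ℕ) (x : Fin n → ℝ) : ℝ :=
  ((-1 : ℝ)^(r+1) / 2^r) *
    ∑ I ∈ Finset.powersetCard r (Finset.univ : Finset (Fin n)), ∏ i ∈ I, x i

def VhatSet (n : ℕ) (κ a : ℝ) (ν : Fin n → ℤ) (J : Finset (Fin n)) (z : Fin n → ℝ) : ℝ :=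
  (∏ i ∈ suppZ n ν, wB a ((ν i : ℝ) * z i))
  * (∏ i ∈ suppZ n ν, ∏ i' ∈ (suppZ n ν).filter (fun i' => i < i'),
      vB κ ((ν i : ℝ) * z i + (ν i' : ℝ) * z i')
        * vB κ ((ν i : ℝ) * z i + (ν i' : ℝ) * z i' + 1))
  * ∏ i ∈ suppZ n ν, ∏ j ∈ J,
      vB κ ((ν i : ℝ) * z i + z j) * vB κ ((ν i : ℝ) * z i - z j)

def UhatSet (n : ℕ) (κ a : ℝ) (J : Finset (Fin n)) (p : ℕ) (z : Fin n → ℝ) : ℝ :=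
  (-1 : ℝ)^p * ∑ t : Fin n → Fin 3,
    (if suppZ n (zeta n t) ⊆ J ∧ (suppZ n (zeta n t)).card = p then
      (∏ k ∈ suppZ n (zeta n t), wB a ((zeta n t k : ℝ) * z k))
      * (∏ k ∈ suppZ n (zeta n t), ∏ k' ∈ (suppZ n (zeta n t)).filter (fun k' => k < k'),
          vB κ ((zeta n t k : ℝ) * z k + (zeta n t k' : ℝ) * z k')
            * vB κ (-((zeta n t k : ℝ) * z k) - (zeta n t k' : ℝ) * z k' - 1))
      * ∏ k ∈ suppZ n (zeta n t), ∏ j ∈ J \ suppZ n (zeta n t),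
          vB κ ((zeta n t k : ℝ) * z k + z j) * vB κ ((zeta n t k : ℝ) * z k - z j)
    else 0)

def addZ (n : ℕ) (l : Fin n → ℕ) (ν : Fin n → ℤ) : Fin n → ℕ :=
  fun i => ((l i : ℤ) + ν i).toNat

/-! ### The measure -/

def WB (n : ℕ) (κ a : ℝ) (x : Fin n → ℝ) : ℝ :=
  (∏ i, (x i) ^ (a - 2) * Real.exp (-2 / x i)) *
    ∏ i : Fin n, ∏ j ∈ Finset.univ.filter (fun j => i < j), |x i - x j| ^ (2 * κ)

def muB (n : ℕ) (κ a : ℝ) : Measure (Fin n → ℝ) :=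
  (volume.restrict {x : Fin n → ℝ | ∀ i, 0 < x i}).withDensity
    (fun x => ENNReal.ofReal (WB n κ a x))

end

/-! Termwise, `x(x − 1 + c) − y(y − 1 + c) = (x − y)(x + y − 1 + c)` with `μᵢ ≤ λᵢ ≤ |λ|` and
`2κ(n − i) ≤ 2κ(n − 1)`, so `d_λ − d_μ ≤ (|λ| − |μ|)(2|λ| − 1 + 2κ(n − 1))` whenever `μ ⊆ λ`.
For `μ ⊂ λ` we have `|μ| < |λ|`, and the bound on `a` then makes `e_λ − e_μ` negative. -/

lemma le_wt {n : ℕ} (l : Fin n → ℕ) (i : Fin n) : l i ≤ wt n l :=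
  Finset.single_le_sum (fun j _ => Nat.zero_le (l j)) (Finset.mem_univ i)

lemma wt_lt_of_subPart {n : ℕ} {m l : Fin n → ℕ} (h : SubPart n m l) : wt n m < wt n l := by
  obtain ⟨hle, hne⟩ := h
  obtain ⟨i, hi⟩ := Function.ne_iff.1 hne
  exact Finset.sum_lt_sum (fun j _ => hle j) ⟨i, Finset.mem_univ i, (hle i).lt_of_ne hi⟩

lemma mul_sub_one_add_sub_mul_sub_one_add_le {x y S c K : ℝ} (hyx : y ≤ x) (hxS : x ≤ S)
    (hcK : c ≤ K) :
    x * (x - 1 + c) - y * (y - 1 + c) ≤ (x - y) * (2 * S - 1 + K) := by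
  rw [show x * (x - 1 + c) - y * (y - 1 + c) = (x - y) * (x + y - 1 + c) by ring]
  exact mul_le_mul_of_nonneg_left (by linarith) (sub_nonneg.2 hyx)

lemma dEig_sub_dEig_le {n : ℕ} {κ : ℝ} (hκ : 0 ≤ κ) {m l : Fin n → ℕ} (hle : ∀ i, m i ≤ l i) :
    dEig n κ l - dEig n κ m
      ≤ ((wt n l : ℝ) - wt n m) * (2 * wt n l - 1 + 2 * κ * ((n : ℝ) - 1)) := by
  have hwt : (wt n l : ℝ) - wt n m = ∑ i, ((l i : ℝ) - m i) := by
    simp only [wt, Nat.cast_sum, Finset.sum_sub_distrib]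
  rw [dEig, dEig, ← Finset.sum_sub_distrib, hwt, Finset.sum_mul]
  refine Finset.sum_le_sum fun i _ => mul_sub_one_add_sub_mul_sub_one_add_le
    (by exact_mod_cast hle i) (by exact_mod_cast le_wt l i) ?_
  linarith [mul_nonneg hκ (Nat.cast_nonneg (i : ℕ) : (0 : ℝ) ≤ (i : ℕ))]

lemma eEig_lt_of_subPart {n : ℕ} {κ a : ℝ} (hκ : 0 ≤ κ) {m l : Fin n → ℕ}
    (ha : a < -2 * ((wt n l : ℝ) + κ * ((n : ℝ) - 1)) + 1) (hml : SubPart n m l) :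
    eEig n κ a l < eEig n κ a m := by
  have hwt : (0 : ℝ) < wt n l - wt n m := sub_pos.2 (by exact_mod_cast wt_lt_of_subPart hml)
  have hd := dEig_sub_dEig_le hκ hml.1
  rw [eEig, eEig]
  nlinarith [mul_lt_mul_of_pos_right ha hwt]

theorem stmt0_general (n : ℕ) (κ a : ℝ) (hκ : 0 ≤ κ)
    (l : Fin n → ℕ)
    (ha : a < -2 * ((wt n l : ℝ) + κ * ((n : ℝ) - 1)) + 1) :
    ∀ m : Fin n → ℕ, IsPartition n m → SubPart n m l →
      eEig n κ a m ≠ eEig n κ a l :=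
  fun _ _ hml => (eEig_lt_of_subPart hκ ha hml).ne'

theorem stmt0 (n : ℕ) (hn : 1 ≤ n) (κ a : ℝ) (hκ : 0 ≤ κ)
    (l : Fin n → ℕ) (hl : IsPartition n l)
    (ha : a < -2 * ((wt n l : ℝ) + κ * ((n : ℝ) - 1)) + 1) :
    ∀ m : Fin n → ℕ, IsPartition n m → SubPart n m l →
      eEig n κ a m ≠ eEig n κ a l :=
  stmt0_general n κ a hκ l ha

end MVB
end

section
/- Fix a positive integer m, and let λ = (λ₁,…,λₙ) and μ = (μ₁,…,μₙ) be two partitions with |λ|, |μ| ≤ m and λ ≠ μ. Assume κ ≥ 0 and a < −2(m + κ(n−1)) + 1. Then there exists a polynomial p ∈ ℝ[x₁,…,xₙ] invariant under all permutations of the variables and under all sign changes xᵢ ↦ −xᵢ such that p(λ + ρ^B) ≠ p(μ + ρ^B). -/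
open MvPolynomial MeasureTheory Filter
open scoped BigOperators Classical

/-!
Since `a` is very negative, every coordinate of `λ + ρ^B` is negative, and the coordinates are
nonincreasing. A nonincreasing vector is determined by the multiset of its coordinates, and a
multiset of nonpositive reals by the multiset of their squares. So `λ + ρ^B` and `μ + ρ^B`
have different multisets of squared coordinates, and these are told apart by the value at some
`t` of `∏ᵢ (t − xᵢ²)`, a polynomial which is symmetric and even in each variable.
-/

section

open Finset MvPolynomial

theorem Antitone.eq_of_map_univ_val_eq {α : Type*} [LinearOrder α] {n : ℕ} {u v : Fin n → α}
    (hu : Antitone u) (hv : Antitone v) (h : univ.val.map u = univ.val.map v) : u = v := by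
  rw [Fin.univ_val_map, Fin.univ_val_map, Multiset.coe_eq_coe] at h
  exact List.ofFn_injective (h.eq_of_sortedGE hu.sortedGE_ofFn hv.sortedGE_ofFn)

theorem map_univ_val_eq_of_sq_eq {ι : Type*} [Fintype ι] {u v : ι → ℝ}
    (hu : ∀ i, u i ≤ 0) (hv : ∀ i, v i ≤ 0)
    (h : univ.val.map (fun i => u i ^ 2) = univ.val.map (fun i => v i ^ 2)) :
    univ.val.map u = univ.val.map v := by
  have hsqrt : ∀ x : ℝ, x ≤ 0 → -√(x ^ 2) = x := fun x hx => by
    rw [Real.sqrt_sq_eq_abs, abs_of_nonpos hx, neg_neg]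
  have := congrArg (Multiset.map fun s => -√s) h
  simp only [Multiset.map_map, Function.comp_def] at this
  rwa [Multiset.map_congr rfl fun i _ => hsqrt _ (hu i),
    Multiset.map_congr rfl fun i _ => hsqrt _ (hv i)] at this

theorem exists_prod_sub_ne_of_map_univ_val_ne {K ι : Type*} [Field K] [Infinite K] [Fintype ι]
    {u v : ι → K} (h : univ.val.map u ≠ univ.val.map v) :
    ∃ t, ∏ i, (t - u i) ≠ ∏ i, (t - v i) := by
  by_contra! heq
  apply h
  have hpoly : ((univ.val.map u).map fun a => Polynomial.X - Polynomial.C a).prod =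
      ((univ.val.map v).map fun a => Polynomial.X - Polynomial.C a).prod := by
    refine Polynomial.funext fun t => ?_
    simp only [Polynomial.eval_multiset_prod, Multiset.map_map, Function.comp_def,
      Polynomial.eval_sub, Polynomial.eval_X, Polynomial.eval_C]
    simpa only [prod_eq_multiset_prod] using heq t
  simpa only [Polynomial.roots_multiset_prod_X_sub_C] using congrArg Polynomial.roots hpoly

theorem MvPolynomial.isSymmetric_prod_C_sub_X_sq {R : Type*} [CommRing R] {n : ℕ} (t : R) :
    (∏ i : Fin n, (C t - X i ^ 2)).IsSymmetric := fun σ => by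
  simp only [map_prod, map_sub, map_pow, rename_X, rename_C]
  exact Equiv.prod_comp σ fun i => C t - X i ^ 2

theorem MvPolynomial.eval_prod_C_sub_X_sq {R : Type*} [CommRing R] {n : ℕ} (t : R)
    (x : Fin n → R) : eval x (∏ i : Fin n, (C t - X i ^ 2)) = ∏ i, (t - x i ^ 2) := by
  simp only [map_prod, map_sub, map_pow, eval_X, eval_C]

end

namespace MVB

open Finset

theorem signInv_prod_C_sub_X_sq {n : ℕ} {𝕜 : Type*} [RCLike 𝕜] (t : 𝕜) :
    SignInv n 𝕜 (∏ i : Fin n, (C t - X i ^ 2)) := by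
  intro ε hε x
  simp only [map_prod, map_sub, map_pow, eval_X, eval_C]
  refine prod_congr rfl fun i _ => ?_
  rcases hε i with h | h <;> simp [h]

theorem shiftl_injective (n : ℕ) (κ a : ℝ) : Function.Injective (shiftl n κ a) := by
  intro l m h
  funext i
  simpa [shiftl] using congrFun h i

theorem shiftl_antitone {n : ℕ} {κ : ℝ} (a : ℝ) (hκ : 0 ≤ κ) {l : Fin n → ℕ}
    (hl : IsPartition n l) : Antitone (shiftl n κ a l) := by
  intro i j hij
  have hlij : (l j : ℝ) ≤ l i := Nat.cast_le.2 (hl i j hij)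
  have hij' : ((i : ℕ) : ℝ) ≤ (j : ℕ) := Nat.cast_le.2 hij
  simp only [shiftl, rhoB]
  nlinarith

theorem shiftl_neg {n M : ℕ} {κ a : ℝ} (hκ : 0 ≤ κ)
    (ha : a < -2 * ((M : ℝ) + κ * ((n : ℝ) - 1)) + 1) {l : Fin n → ℕ} (hlM : wt n l ≤ M)
    (i : Fin n) : shiftl n κ a l i < 0 := by
  have hli : (l i : ℝ) ≤ M := by
    exact_mod_cast (single_le_sum (fun j _ => Nat.zero_le (l j)) (mem_univ i)).trans hlM
  have hi : (0 : ℝ) ≤ (i : ℕ) := Nat.cast_nonneg _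
  simp only [shiftl, rhoB]
  nlinarith

theorem stmt9_general (n M : ℕ) (κ a : ℝ) (hκ : 0 ≤ κ)
    (ha : a < -2 * ((M : ℝ) + κ * ((n : ℝ) - 1)) + 1)
    (l m : Fin n → ℕ) (hl : IsPartition n l) (hm : IsPartition n m)
    (hlM : wt n l ≤ M) (hmM : wt n m ≤ M) (hne : l ≠ m) :
    ∃ p : MvPolynomial (Fin n) ℝ, p.IsSymmetric ∧ SignInv n ℝ p ∧
      MvPolynomial.eval (shiftl n κ a l) p ≠ MvPolynomial.eval (shiftl n κ a m) p := by
  have hsq_ne : univ.val.map (fun i => shiftl n κ a l i ^ 2) ≠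
      univ.val.map (fun i => shiftl n κ a m i ^ 2) := fun h =>
    hne <| shiftl_injective n κ a <|
      (shiftl_antitone a hκ hl).eq_of_map_univ_val_eq (shiftl_antitone a hκ hm) <|
        map_univ_val_eq_of_sq_eq (fun i => (shiftl_neg hκ ha hlM i).le)
          (fun i => (shiftl_neg hκ ha hmM i).le) h
  obtain ⟨t, ht⟩ := exists_prod_sub_ne_of_map_univ_val_ne hsq_ne
  refine ⟨∏ i, (C t - X i ^ 2), isSymmetric_prod_C_sub_X_sq t, signInv_prod_C_sub_X_sq t, ?_⟩
  rwa [eval_prod_C_sub_X_sq, eval_prod_C_sub_X_sq]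

theorem stmt9 (n M : ℕ) (hM : 1 ≤ M) (κ a : ℝ) (hκ : 0 ≤ κ)
    (ha : a < -2 * ((M : ℝ) + κ * ((n : ℝ) - 1)) + 1)
    (l m : Fin n → ℕ) (hl : IsPartition n l) (hm : IsPartition n m)
    (hlM : wt n l ≤ M) (hmM : wt n m ≤ M) (hne : l ≠ m) :
    ∃ p : MvPolynomial (Fin n) ℝ, p.IsSymmetric ∧ SignInv n ℝ p ∧
      MvPolynomial.eval (shiftl n κ a l) p ≠ MvPolynomial.eval (shiftl n κ a m) p :=
  stmt9_general n M κ a hκ ha l m hl hm hlM hmM hne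

end MVB
end

section
/- Let n ≥ 1, m ≥ 0 and κ ≥ 0. Every symmetric polynomial f in n variables of degree at most m satisfies ∫_{(0,∞)ⁿ} |f(x)|² dμ^B(x) < ∞ if and only if a < −2(m + κ(n−1)) + 1. -/
open MvPolynomial MeasureTheory Filter
open scoped BigOperators Classical

namespace MVB

/-!
For `n = k + 1`, write `e = a - 2 + 2m + 2κk`. Since `|xᵢ - xⱼ| ≤ (1 + xᵢ)(1 + xⱼ)` and
`|f x| ≤ C ∏ (1 + xᵢ)^m`, the integrand `WB · f²` is dominated on `(0,∞)ⁿ` by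
`C² ∏ φ(xᵢ)` with `φ t = (1 + t)^(2m + 2κk) t^(a-2) e^(-2/t)`; the factor `e^(-2/t)` removes the
singularity at `0`, and at infinity `φ t ≍ t^e`, so `φ` is integrable when `e < -1`.
Conversely, for `f = (x₀ + ⋯ + xₖ)^m`, on the region where `x₀ → ∞` and the other coordinates
stay in separated unit cells, the integrand is bounded below by a product of one-variable
functions whose `x₀`-factor is `≳ x₀^e`, which is not integrable at infinity when `e ≥ -1`.
-/

open Set
open scoped ENNReal

theorem integrableOn_rpow_mul_exp_neg_div {c : ℝ} (hc : c < -1) :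
    IntegrableOn (fun t : ℝ => t ^ c * Real.exp (-2 / t)) (Ioi 0) := by
  -- `t = s⁻¹` turns this into `∫ s ^ (-c - 2) * exp (-2 * s) ds`, a Gamma-type integral
  have h := integrableOn_rpow_mul_exp_neg_mul_rpow (s := -c - 2) (by linarith) one_pos two_pos
  rw [← integrableOn_Ioi_comp_rpow_iff' _ (neg_ne_zero.2 one_ne_zero)] at h
  refine h.congr_fun (fun t (ht : 0 < t) => ?_) measurableSet_Ioi
  simp only [smul_eq_mul, Real.rpow_one, Real.rpow_neg_one]
  rw [Real.inv_rpow ht.le, ← Real.rpow_neg ht.le, mul_left_comm, ← mul_assoc,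
    ← Real.rpow_add ht, div_eq_mul_inv]
  congr 2
  ring

theorem one_add_rpow_le {t r : ℝ} (ht : 0 ≤ t) (hr : 0 ≤ r) :
    (1 + t) ^ r ≤ 2 ^ r * (1 + t ^ r) := by
  rcases le_total t 1 with h | h
  · calc (1 + t) ^ r ≤ 2 ^ r := Real.rpow_le_rpow (by linarith) (by linarith) hr
      _ ≤ 2 ^ r * (1 + t ^ r) :=
        le_mul_of_one_le_right (by positivity) (by linarith [Real.rpow_nonneg ht r])
  · calc (1 + t) ^ r ≤ (2 * t) ^ r := Real.rpow_le_rpow (by linarith) (by linarith) hr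
      _ = 2 ^ r * t ^ r := Real.mul_rpow zero_le_two ht
      _ ≤ 2 ^ r * (1 + t ^ r) := by gcongr; linarith

theorem integrableOn_one_add_rpow_mul {c r : ℝ} (hr : 0 ≤ r) (h : c + r < -1) :
    IntegrableOn (fun t : ℝ => (1 + t) ^ r * (t ^ c * Real.exp (-2 / t))) (Ioi 0) := by
  refine Integrable.mono' (((integrableOn_rpow_mul_exp_neg_div (by linarith)).add
    (integrableOn_rpow_mul_exp_neg_div h)).const_mul (2 ^ r)) (by fun_prop) ?_
  refine (ae_restrict_iff' measurableSet_Ioi).2 (Eventually.of_forall fun t (ht : 0 < t) => ?_)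
  have hw : 0 ≤ t ^ c * Real.exp (-2 / t) := by positivity
  rw [Real.norm_of_nonneg (by positivity), Pi.add_apply, Real.rpow_add ht]
  calc (1 + t) ^ r * (t ^ c * Real.exp (-2 / t))
      ≤ 2 ^ r * (1 + t ^ r) * (t ^ c * Real.exp (-2 / t)) :=
        mul_le_mul_of_nonneg_right (one_add_rpow_le ht.le hr) hw
    _ = _ := by ring

theorem lintegral_Ioi_rpow_eq_top {R e : ℝ} (hR : 0 < R) (he : -1 ≤ e) :
    ∫⁻ t in Ioi R, ENNReal.ofReal (t ^ e) = ∞ := by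
  by_contra h
  have hint := (lintegral_ofReal_ne_top_iff_integrable (by fun_prop)
    ((ae_restrict_iff' measurableSet_Ioi).2 (Eventually.of_forall fun t (ht : R < t) =>
      Real.rpow_nonneg (hR.trans ht).le e))).1 h
  exact he.not_gt ((integrableOn_Ioi_rpow_iff hR).1 hint)

theorem lintegral_fin_nat_prod_eq_prod {n : ℕ} {α : Type*} [MeasurableSpace α]
    (μ : Fin n → Measure α) [∀ i, SigmaFinite (μ i)] {f : Fin n → α → ℝ≥0∞}
    (hf : ∀ i, Measurable (f i)) :
    ∫⁻ x, ∏ i, f i (x i) ∂Measure.pi μ = ∏ i, ∫⁻ t, f i t ∂μ i := by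
  induction n with
  | zero => simp
  | succ n ih =>
    rw [← ((measurePreserving_piFinSuccAbove μ 0).symm).lintegral_comp_emb
      (MeasurableEquiv.measurableEmbedding _)]
    simp_rw [MeasurableEquiv.piFinSuccAbove_symm_apply, Fin.insertNthEquiv,
      Fin.prod_univ_succ, Fin.insertNth_zero, Equiv.coe_fn_mk, Fin.cons_succ,
      Fin.zero_succAbove, cast_eq, Fin.cons_zero]
    have hg : Measurable fun y : Fin n → α => ∏ i : Fin n, f i.succ (y i) :=
      Finset.measurable_prod _ fun i _ => (hf i.succ).comp (measurable_pi_apply i)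
    rw [lintegral_prod_mul (hf 0).aemeasurable hg.aemeasurable, ih _ fun i => hf i.succ]

theorem setLIntegral_univ_pi_fin_nat_prod_eq_prod {n : ℕ} {α : Type*} [MeasurableSpace α]
    (μ : Fin n → Measure α) [∀ i, SigmaFinite (μ i)] (s : Fin n → Set α)
    {f : Fin n → α → ℝ≥0∞} (hf : ∀ i, Measurable (f i)) :
    ∫⁻ x in univ.pi s, ∏ i, f i (x i) ∂Measure.pi μ = ∏ i, ∫⁻ t in s i, f i t ∂μ i := by
  rw [Measure.restrict_pi_pi]
  exact lintegral_fin_nat_prod_eq_prod _ hf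

theorem prod_lt_pairs_mul_eq_prod_pow {M : Type*} [CommMonoid M] {n : ℕ} (g : Fin n → M) :
    ∏ i, ∏ j ∈ Finset.univ.filter (i < ·), (g i * g j) = ∏ i, g i ^ (n - 1) := by
  simp_rw [Finset.prod_mul_distrib, Finset.prod_const, Finset.filter_lt_eq_Ioi]
  rw [Finset.prod_comm' (t' := Finset.univ) (s' := Finset.Iio) (by simp),
    ← Finset.prod_mul_distrib]
  refine Finset.prod_congr rfl fun i _ => ?_
  rw [Finset.prod_const, ← pow_add, Fin.card_Ioi, Fin.card_Iio]
  congr 1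
  omega

theorem abs_eval_le_of_totalDegree_le {σ : Type*} [Fintype σ] {m : ℕ}
    {f : MvPolynomial σ ℝ} (hf : f.totalDegree ≤ m) (x : σ → ℝ) :
    |eval x f| ≤ (∑ d ∈ f.support, |f.coeff d|) * ∏ i, (1 + |x i|) ^ m := by
  rw [eval_eq', Finset.sum_mul]
  refine (Finset.abs_sum_le_sum_abs _ _).trans (Finset.sum_le_sum fun d hd => ?_)
  have hdeg : ∀ i, d i ≤ m := fun i =>
    ((Finset.single_le_sum (fun j _ => Nat.zero_le (d j)) (Finset.mem_univ i)).trans_eq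
      (Finsupp.sum_fintype d (fun _ e => e) fun _ => rfl).symm).trans
      ((le_totalDegree hd).trans hf)
  rw [abs_mul, Finset.abs_prod]
  gcongr with i
  rw [abs_pow]
  calc |x i| ^ d i ≤ (1 + |x i|) ^ d i := by gcongr; linarith
    _ ≤ (1 + |x i|) ^ m := pow_le_pow_right₀ (by linarith [abs_nonneg (x i)]) (hdeg i)

theorem isSymmetric_sum_X_pow {σ R : Type*} [CommSemiring R] [Fintype σ] (m : ℕ) :
    ((∑ i, X i : MvPolynomial σ R) ^ m).IsSymmetric := by
  rw [← esymm_one]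
  exact (symmetricSubalgebra σ R).pow_mem (esymm_isSymmetric σ R 1) m

theorem totalDegree_sum_X_pow_le {σ R : Type*} [CommSemiring R] [Fintype σ] (m : ℕ) :
    ((∑ i, X i : MvPolynomial σ R) ^ m).totalDegree ≤ m := by
  simpa using ((IsHomogeneous.sum _ _ 1 fun i _ => isHomogeneous_X R i).pow m).totalDegree_le

theorem measurable_WB (n : ℕ) (κ a : ℝ) : Measurable (WB n κ a) := by
  unfold WB
  fun_prop

theorem WB_nonneg {n : ℕ} (κ a : ℝ) {x : Fin n → ℝ} (hx : ∀ i, 0 < x i) : 0 ≤ WB n κ a x :=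
  mul_nonneg (Finset.prod_nonneg fun i _ => mul_nonneg (Real.rpow_nonneg (hx i).le _)
      (Real.exp_nonneg _))
    (Finset.prod_nonneg fun _ _ => Finset.prod_nonneg fun _ _ => Real.rpow_nonneg (abs_nonneg _) _)

theorem integrable_muB_iff {n : ℕ} {κ a : ℝ} {g : (Fin n → ℝ) → ℝ} (hg : Measurable g)
    (hg0 : 0 ≤ g) :
    Integrable g (muB n κ a) ↔
      ∫⁻ x in univ.pi fun _ => Ioi 0, ENNReal.ofReal (WB n κ a x * g x) < ∞ := by
  have hS : {x : Fin n → ℝ | ∀ i, 0 < x i} = univ.pi fun _ => Ioi 0 := by ext; simp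
  rw [← lintegral_ofReal_ne_top_iff_integrable hg.aestronglyMeasurable (.of_forall hg0), muB,
    lintegral_withDensity_eq_lintegral_mul _ (measurable_WB n κ a).ennreal_ofReal
      hg.ennreal_ofReal, hS, lt_top_iff_ne_top]
  refine Iff.of_eq (congrArg (· ≠ ∞) (setLIntegral_congr_fun
    (MeasurableSet.univ_pi fun _ => measurableSet_Ioi) fun x hx => ?_))
  exact (ENNReal.ofReal_mul (WB_nonneg κ a fun i => hx i (mem_univ i))).symm

theorem prod_abs_sub_rpow_le {n : ℕ} {κ : ℝ} (hκ : 0 ≤ κ) {x : Fin n → ℝ} (hx : ∀ i, 0 ≤ x i) :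
    ∏ i, ∏ j ∈ Finset.univ.filter (i < ·), |x i - x j| ^ (2 * κ)
      ≤ ∏ i, (1 + x i) ^ (2 * κ * (n - 1 : ℕ)) := by
  calc ∏ i, ∏ j ∈ Finset.univ.filter (i < ·), |x i - x j| ^ (2 * κ)
      ≤ ∏ i, ∏ j ∈ Finset.univ.filter (i < ·), ((1 + x i) ^ (2 * κ) * (1 + x j) ^ (2 * κ)) := by
        gcongr with i _ j
        rw [← Real.mul_rpow (by linarith [hx i]) (by linarith [hx j])]
        gcongr
        rw [abs_sub_le_iff]
        constructor <;> nlinarith [hx i, hx j]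
    _ = ∏ i, (1 + x i) ^ (2 * κ * (n - 1 : ℕ)) := by
        rw [prod_lt_pairs_mul_eq_prod_pow]
        exact Finset.prod_congr rfl fun i _ =>
          (Real.rpow_mul_natCast (by linarith [hx i]) _ _).symm

theorem WB_mul_eval_sq_le {n m : ℕ} {κ : ℝ} (a : ℝ) (hκ : 0 ≤ κ) {f : MvPolynomial (Fin n) ℝ}
    (hf : f.totalDegree ≤ m) {x : Fin n → ℝ} (hx : ∀ i, 0 < x i) :
    WB n κ a x * eval x f ^ 2 ≤ (∑ d ∈ f.support, |f.coeff d|) ^ 2 *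
      ∏ i, (1 + x i) ^ (2 * m + 2 * κ * (n - 1 : ℕ)) *
        (x i ^ (a - 2) * Real.exp (-2 / x i)) := by
  have hx0 : ∀ i, 0 ≤ x i := fun i => (hx i).le
  have hevalsq :
      eval x f ^ 2 ≤ (∑ d ∈ f.support, |f.coeff d|) ^ 2 * ∏ i, (1 + x i) ^ (2 * m) := by
    have h := abs_eval_le_of_totalDegree_le hf x
    simp only [abs_of_nonneg (hx0 _)] at h
    calc eval x f ^ 2 = |eval x f| ^ 2 := (sq_abs _).symm
      _ ≤ ((∑ d ∈ f.support, |f.coeff d|) * ∏ i, (1 + x i) ^ m) ^ 2 := by gcongr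
      _ = _ := by
        rw [mul_pow, ← Finset.prod_pow]
        simp_rw [← pow_mul, mul_comm m 2]
  have hw : 0 ≤ ∏ i, (x i ^ (a - 2) * Real.exp (-2 / x i)) :=
    Finset.prod_nonneg fun i _ => mul_nonneg (Real.rpow_nonneg (hx0 i) _) (Real.exp_nonneg _)
  have hsplit : ∀ i, (1 + x i) ^ (2 * m + 2 * κ * (n - 1 : ℕ))
      = (1 + x i) ^ (2 * m) * (1 + x i) ^ (2 * κ * (n - 1 : ℕ)) := fun i => by
    rw [Real.rpow_add (by linarith [hx i]), ← Real.rpow_natCast]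
    push_cast
    rfl
  calc WB n κ a x * eval x f ^ 2
      ≤ (∏ i, (x i ^ (a - 2) * Real.exp (-2 / x i))) *
          (∏ i, (1 + x i) ^ (2 * κ * (n - 1 : ℕ))) *
          ((∑ d ∈ f.support, |f.coeff d|) ^ 2 * ∏ i, (1 + x i) ^ (2 * m)) :=
        mul_le_mul (mul_le_mul_of_nonneg_left (prod_abs_sub_rpow_le hκ hx0) hw) hevalsq
          (sq_nonneg _) (mul_nonneg hw (Finset.prod_nonneg fun i _ =>
            Real.rpow_nonneg (by linarith [hx i]) _))
    _ = _ := by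
        simp_rw [hsplit, Finset.prod_mul_distrib]
        ring

theorem integrable_eval_sq_muB {n m : ℕ} {κ a : ℝ} (hκ : 0 ≤ κ)
    (ha : a - 2 + 2 * m + 2 * κ * (n - 1 : ℕ) < -1) {f : MvPolynomial (Fin n) ℝ}
    (hf : f.totalDegree ≤ m) :
    Integrable (fun x => eval x f ^ 2) (muB n κ a) := by
  set r : ℝ := 2 * m + 2 * κ * (n - 1 : ℕ)
  set φ : ℝ → ℝ := fun t => (1 + t) ^ r * (t ^ (a - 2) * Real.exp (-2 / t))
  have hφ : IntegrableOn φ (Ioi 0) :=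
    integrableOn_one_add_rpow_mul (by positivity) (by linarith)
  have hφm : Measurable φ := by fun_prop
  have hφ0 : ∀ t ∈ Ioi (0:ℝ), 0 ≤ φ t := fun t (ht : 0 < t) => by have := ht.le; positivity
  have hΦm : Measurable fun x : Fin n → ℝ => ∏ i, ENNReal.ofReal (φ (x i)) :=
    Finset.measurable_prod _ fun i _ => hφm.ennreal_ofReal.comp (measurable_pi_apply i)
  set C := (∑ d ∈ f.support, |f.coeff d|) ^ 2
  rw [integrable_muB_iff ((continuous_eval f).measurable.pow_const 2) fun x => sq_nonneg _,
    volume_pi]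
  calc ∫⁻ x in univ.pi fun _ => Ioi 0, ENNReal.ofReal (WB n κ a x * eval x f ^ 2) ∂Measure.pi _
      ≤ ∫⁻ x in univ.pi fun _ => Ioi 0, ENNReal.ofReal C *
          ∏ i, ENNReal.ofReal (φ (x i)) ∂Measure.pi fun _ => volume := by
        refine setLIntegral_mono (hΦm.const_mul _) fun x hx => ?_
        have hx : ∀ i, 0 < x i := fun i => hx i (mem_univ i)
        rw [← ENNReal.ofReal_prod_of_nonneg fun i _ => hφ0 _ (hx i),
          ← ENNReal.ofReal_mul (sq_nonneg _)]
        exact ENNReal.ofReal_le_ofReal (WB_mul_eval_sq_le a hκ hf hx)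
    _ = ENNReal.ofReal C * ∏ i : Fin n, ∫⁻ t in Ioi 0, ENNReal.ofReal (φ t) := by
        rw [lintegral_const_mul _ hΦm, setLIntegral_univ_pi_fin_nat_prod_eq_prod
          (f := fun _ t => ENNReal.ofReal (φ t)) _ _ fun _ => hφm.ennreal_ofReal]
    _ < ∞ := ENNReal.mul_lt_top ENNReal.ofReal_lt_top
        (ENNReal.prod_lt_top fun _ _ => hφ.lintegral_lt_top)

-- The threshold `2 (k + 1)` makes `x₀ / 2` exceed every other coordinate of the box.
noncomputable def testBox (k : ℕ) (i : Fin (k + 1)) : Set ℝ :=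
  if i = 0 then Ioi (2 * (k + 1)) else Ioo (i : ℕ) ((i : ℕ) + 1 / 2)

noncomputable def sep (k : ℕ) (i : Fin (k + 1)) (t : ℝ) : ℝ := if i = 0 then t / 2 else 1 / 2

theorem testBox_subset_Ioi (k : ℕ) (i : Fin (k + 1)) : testBox k i ⊆ Ioi 0 := by
  unfold testBox
  split_ifs
  · exact Ioi_subset_Ioi (by positivity)
  · exact Ioo_subset_Ioi_self.trans (Ioi_subset_Ioi (Nat.cast_nonneg _))

theorem sep_pos {k : ℕ} (i : Fin (k + 1)) {t : ℝ} (ht : 0 < t) : 0 < sep k i t := by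
  unfold sep
  split_ifs <;> positivity

theorem sep_le_abs_sub {k : ℕ} {x : Fin (k + 1) → ℝ} (hx : x ∈ univ.pi (testBox k))
    {i j : Fin (k + 1)} (hij : i < j) : sep k i (x i) ≤ |x i - x j| := by
  have hj0 : j ≠ 0 := (Fin.zero_le i).trans_lt hij |>.ne'
  have hxj := hx j (mem_univ j)
  simp only [testBox, if_neg hj0, mem_Ioo] at hxj
  have hjk : ((j : ℕ) : ℝ) ≤ k := by exact_mod_cast Nat.lt_succ_iff.1 j.isLt
  by_cases hi : i = 0
  · subst hi
    have hx0 := hx 0 (mem_univ 0)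
    simp only [testBox, ↓reduceIte, mem_Ioi] at hx0
    simp only [sep, ↓reduceIte]
    calc x 0 / 2 ≤ x 0 - x j := by linarith
      _ ≤ |x 0 - x j| := le_abs_self _
  · have hxi := hx i (mem_univ i)
    simp only [testBox, if_neg hi, mem_Ioo] at hxi
    simp only [sep, if_neg hi]
    have hij' : ((i : ℕ) : ℝ) + 1 ≤ (j : ℕ) := by exact_mod_cast Nat.succ_le_of_lt hij
    calc 1 / 2 ≤ x j - x i := by linarith
      _ ≤ |x i - x j| := by rw [abs_sub_comm]; exact le_abs_self _

-- Row `i` of the Vandermonde product, and for `i = 0` also the factor `x₀ ^ (2m)` of `f²`,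
-- is charged to the coordinate `xᵢ`.
noncomputable def boxWeight (k m : ℕ) (κ a : ℝ) (i : Fin (k + 1)) (t : ℝ) : ℝ :=
  (if i = 0 then t ^ (2 * m) else 1) *
    (t ^ (a - 2) * Real.exp (-2 / t) * (sep k i t ^ (2 * κ)) ^ (Finset.univ.filter (i < ·)).card)

theorem measurable_boxWeight (k m : ℕ) (κ a : ℝ) (i : Fin (k + 1)) :
    Measurable (boxWeight k m κ a i) := by
  have hsep : Measurable (sep k i) := by unfold sep; split_ifs <;> fun_prop
  exact (by split_ifs <;> fun_prop : Measurable fun t : ℝ => if i = 0 then t ^ (2 * m) else 1).mul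
    ((by fun_prop : Measurable fun t : ℝ => t ^ (a - 2) * Real.exp (-2 / t)).mul
      ((hsep.pow_const _).pow_const _))

theorem boxWeight_pos (k m : ℕ) (κ a : ℝ) (i : Fin (k + 1)) {t : ℝ} (ht : 0 < t) :
    0 < boxWeight k m κ a i t :=
  mul_pos (by split_ifs <;> positivity)
    (mul_pos (by positivity) (pow_pos (Real.rpow_pos_of_pos (sep_pos i ht) _) _))

theorem prod_boxWeight_le {k m : ℕ} {κ : ℝ} (a : ℝ) (hκ : 0 ≤ κ) {x : Fin (k + 1) → ℝ}
    (hx : x ∈ univ.pi (testBox k)) :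
    ∏ i, boxWeight k m κ a i (x i) ≤
      WB (k + 1) κ a x * eval x ((∑ i, X i : MvPolynomial (Fin (k + 1)) ℝ) ^ m) ^ 2 := by
  have hpos : ∀ i, 0 < x i := fun i => testBox_subset_Ioi k i (hx i (mem_univ i))
  have hw : ∀ i, 0 ≤ x i ^ (a - 2) * Real.exp (-2 / x i) := fun i =>
    mul_nonneg (Real.rpow_nonneg (hpos i).le _) (Real.exp_nonneg _)
  have hsep : ∀ i, 0 ≤ sep k i (x i) ^ (2 * κ) := fun i =>
    Real.rpow_nonneg (sep_pos i (hpos i)).le _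
  have hrow : ∀ i, 0 ≤ x i ^ (a - 2) * Real.exp (-2 / x i) *
      (sep k i (x i) ^ (2 * κ)) ^ (Finset.univ.filter (i < ·)).card := fun i =>
    mul_nonneg (hw i) (pow_nonneg (hsep i) _)
  have hrows : ∏ i, (x i ^ (a - 2) * Real.exp (-2 / x i) *
        (sep k i (x i) ^ (2 * κ)) ^ (Finset.univ.filter (i < ·)).card) ≤ WB (k + 1) κ a x := by
    rw [WB, ← Finset.prod_mul_distrib]
    refine Finset.prod_le_prod (fun i _ => hrow i) fun i _ => mul_le_mul_of_nonneg_left ?_ (hw i)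
    rw [← Finset.prod_const]
    exact Finset.prod_le_prod (fun _ _ => hsep i) fun j hj => Real.rpow_le_rpow
      (sep_pos i (hpos i)).le (sep_le_abs_sub hx (Finset.mem_filter.1 hj).2) (by positivity)
  have hsum : x 0 ^ (2 * m) ≤ eval x ((∑ i, X i : MvPolynomial (Fin (k + 1)) ℝ) ^ m) ^ 2 := by
    simp only [map_pow, map_sum, eval_X, ← pow_mul, mul_comm m 2]
    exact pow_le_pow_left₀ (hpos 0).le
      (Finset.single_le_sum (fun i _ => (hpos i).le) (Finset.mem_univ 0)) _
  calc ∏ i, boxWeight k m κ a i (x i)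
      = x 0 ^ (2 * m) * ∏ i, (x i ^ (a - 2) * Real.exp (-2 / x i) *
          (sep k i (x i) ^ (2 * κ)) ^ (Finset.univ.filter (i < ·)).card) := by
        unfold boxWeight
        rw [Finset.prod_mul_distrib, Finset.prod_ite_eq', if_pos (Finset.mem_univ 0)]
    _ ≤ eval x ((∑ i, X i : MvPolynomial (Fin (k + 1)) ℝ) ^ m) ^ 2 * WB (k + 1) κ a x :=
        mul_le_mul hsum hrows (Finset.prod_nonneg fun i _ => hrow i) (sq_nonneg _)
    _ = _ := mul_comm _ _

theorem boxWeight_zero_ge {k m : ℕ} {κ : ℝ} (a : ℝ) {t : ℝ} (ht : 1 ≤ t) :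
    Real.exp (-2) * ((1 / 2 : ℝ) ^ (2 * κ)) ^ k * t ^ (a - 2 + 2 * m + 2 * κ * k)
      ≤ boxWeight k m κ a 0 t := by
  have ht0 : 0 < t := one_pos.trans_le ht
  have hcard : (Finset.univ.filter fun j : Fin (k + 1) => 0 < j).card = k := by
    simp [Finset.filter_lt_eq_Ioi]
  have hsplit :
      t ^ (a - 2 + 2 * m + 2 * κ * k) = t ^ (2 * m) * t ^ (a - 2) * (t ^ (2 * κ)) ^ k := by
    rw [Real.rpow_add ht0, Real.rpow_add ht0, ← Real.rpow_mul_natCast ht0.le,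
      mul_comm (t ^ (2 * m)), ← Real.rpow_natCast]
    push_cast
    ring_nf
  have hexp : Real.exp (-2) ≤ Real.exp (-2 / t) :=
    Real.exp_le_exp.2 (by rw [neg_div, neg_le_neg_iff, div_le_iff₀ ht0]; linarith)
  simp only [boxWeight, sep, ↓reduceIte, hcard, hsplit]
  rw [div_eq_mul_one_div t, Real.mul_rpow ht0.le (by norm_num), mul_pow]
  calc _ = t ^ (2 * m) * t ^ (a - 2) * (t ^ (2 * κ)) ^ k * ((1 / 2 : ℝ) ^ (2 * κ)) ^ k *
        Real.exp (-2) := by ring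
    _ ≤ t ^ (2 * m) * t ^ (a - 2) * (t ^ (2 * κ)) ^ k * ((1 / 2 : ℝ) ^ (2 * κ)) ^ k *
        Real.exp (-2 / t) := by gcongr
    _ = _ := by ring

theorem lintegral_boxWeight_zero_eq_top {k m : ℕ} {κ a : ℝ}
    (ha : -1 ≤ a - 2 + 2 * m + 2 * κ * k) :
    ∫⁻ t in testBox k 0, ENNReal.ofReal (boxWeight k m κ a 0 t) = ∞ := by
  have hK : 0 < Real.exp (-2) * ((1 / 2 : ℝ) ^ (2 * κ)) ^ k := by positivity
  have hR : (0 : ℝ) < 2 * (k + 1) := by positivity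
  simp only [testBox, ↓reduceIte]
  refine eq_top_mono (setLIntegral_mono' measurableSet_Ioi fun t (ht : 2 * (k + 1) < t) =>
    ENNReal.ofReal_le_ofReal (boxWeight_zero_ge a (by linarith))) ?_
  simp_rw [ENNReal.ofReal_mul hK.le]
  rw [lintegral_const_mul _ (by fun_prop), lintegral_Ioi_rpow_eq_top hR ha,
    ENNReal.mul_top (ENNReal.ofReal_pos.2 hK).ne']

theorem lintegral_boxWeight_ne_zero (k m : ℕ) (κ a : ℝ) (i : Fin (k + 1)) :
    ∫⁻ t in testBox k i, ENNReal.ofReal (boxWeight k m κ a i t) ≠ 0 := by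
  refine ((setLIntegral_pos_iff (measurable_boxWeight k m κ a i).ennreal_ofReal).2 ?_).ne'
  have hopen : IsOpen (testBox k i) := by
    unfold testBox; split_ifs
    · exact isOpen_Ioi
    · exact isOpen_Ioo
  have hne : (testBox k i).Nonempty := by
    unfold testBox; split_ifs
    · exact nonempty_Ioi
    · exact nonempty_Ioo.2 (by linarith)
  refine (hopen.measure_pos volume hne).trans_le (measure_mono fun t ht => ⟨?_, ht⟩)
  exact (ENNReal.ofReal_pos.2 (boxWeight_pos k m κ a i (testBox_subset_Ioi k i ht))).ne'

theorem not_integrable_sum_X_pow_sq {k m : ℕ} {κ a : ℝ} (hκ : 0 ≤ κ)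
    (ha : -1 ≤ a - 2 + 2 * m + 2 * κ * k) :
    ¬ Integrable (fun x => eval x ((∑ i, X i : MvPolynomial (Fin (k + 1)) ℝ) ^ m) ^ 2)
      (muB (k + 1) κ a) := by
  rw [integrable_muB_iff ((continuous_eval _).measurable.pow_const 2) fun x => sq_nonneg _,
    not_lt, top_le_iff]
  have hbox : MeasurableSet (univ.pi (testBox k)) := MeasurableSet.univ_pi fun i => by
    unfold testBox; split_ifs <;> measurability
  refine eq_top_mono (lintegral_mono_set (pi_mono fun i _ => testBox_subset_Ioi k i)) ?_
  refine eq_top_mono (setLIntegral_mono' hbox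
    (f := fun x => ∏ i, ENNReal.ofReal (boxWeight k m κ a i (x i))) fun x hx => ?_) ?_
  · exact (ENNReal.ofReal_prod_of_nonneg fun i _ =>
      (boxWeight_pos k m κ a i (testBox_subset_Ioi k i (hx i (mem_univ i)))).le).symm.trans_le
      (ENNReal.ofReal_le_ofReal (prod_boxWeight_le a hκ hx))
  rw [volume_pi, setLIntegral_univ_pi_fin_nat_prod_eq_prod
    (f := fun i t => ENNReal.ofReal (boxWeight k m κ a i t)) _ _
    fun i => (measurable_boxWeight k m κ a i).ennreal_ofReal, Fin.prod_univ_succ,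
    lintegral_boxWeight_zero_eq_top ha,
    ENNReal.top_mul (Finset.prod_ne_zero_iff.2 fun i _ => lintegral_boxWeight_ne_zero k m κ a _)]

theorem stmt14 (n : ℕ) (hn : 1 ≤ n) (m : ℕ) (κ a : ℝ) (hκ : 0 ≤ κ) :
    (∀ f : MvPolynomial (Fin n) ℝ, f.IsSymmetric → f.totalDegree ≤ m →
      Integrable (fun x => (MvPolynomial.eval x f) ^ 2) (muB n κ a))
      ↔ a < -2 * ((m : ℝ) + κ * ((n : ℝ) - 1)) + 1 := by
  obtain ⟨k, rfl⟩ := Nat.exists_eq_add_of_le' hn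
  have hexp : a < -2 * ((m : ℝ) + κ * (((k + 1 : ℕ) : ℝ) - 1)) + 1 ↔
      a - 2 + 2 * m + 2 * κ * k < -1 := by
    push_cast
    constructor <;> intro h <;> linarith
  rw [hexp]
  refine ⟨fun h => ?_, fun ha f _ hf => integrable_eval_sq_muB hκ (by simpa using ha) hf⟩
  by_contra! ha
  exact not_integrable_sum_X_pow_sq hκ ha
    (h _ (isSymmetric_sum_X_pow m) (totalDegree_sum_X_pow_le m))

end MVB
end
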